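/- arXiv:1412.3874 — 2 statements merged into one kernel-verified Lean document; each statement's English description precedes it below -/
import Mathlib

section
/- Let y = α₁α₂…αₜ be a word over {a,b} with φ(y_i) ≥ 0 for every prefix y_i, where φ(a)=2, φ(b)=−2. Define w(y) = Σ_{i=1}^{t} φ(y_i). If y′ is obtained from y by deleting two letters α_i and α_j with i < j, α_i = a, α_j = b, then w(y′) ≤ w(y). -/
/-- A word over the alphabet {a,b} is a list of booleans: `true` = a, `false` = b. -/
abbrev Word := List Bool

/-- φ(a) = 2, φ(b) = -2, extended additively to words. -/
def phi (y : Word) : ℤ := (y.map (fun c => if c then (2 : ℤ) else -2)).sum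

/-- The width of a word: the sum of φ over all nonempty prefixes. -/
def wd (y : Word) : ℤ := ∑ i ∈ Finset.range y.length, phi (y.take (i + 1))

/-! Inserting a letter `c` after `x` adds the new prefix `x ++ [c]` and shifts the value of each
of the `y.length` later prefixes by `φ(c)`. The deleted `b` and `a` therefore cost
`φ(u a v b) - 2|z|` and `φ(u a) + 2(|v| + |z|)`: the width drops by `φ(u a) + φ(u a v b) + 2|v|`,
which is nonnegative because `u a` and `u a v b` are prefixes. -/

@[simp]
lemma phi_append (x y : Word) : phi (x ++ y) = phi x + phi y := by
  simp [phi]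

@[simp]
lemma phi_singleton_true : phi [true] = 2 := rfl

@[simp]
lemma phi_singleton_false : phi [false] = -2 := rfl

lemma wd_singleton (c : Bool) : wd [c] = phi [c] := by
  simp [wd]

lemma wd_append (x y : Word) : wd (x ++ y) = wd x + y.length * phi x + wd y := by
  have hleft : ∀ i ∈ Finset.range x.length, phi ((x ++ y).take (i + 1)) = phi (x.take (i + 1)) := by
    intro i hi
    rw [List.take_append_of_le_length (Finset.mem_range.mp hi)]
  have hright : ∀ i ∈ Finset.range y.length,
      phi ((x ++ y).take (x.length + i + 1)) = phi x + phi (y.take (i + 1)) := by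
    intro i _
    rw [add_assoc, List.take_length_add_append, phi_append]
  unfold wd
  rw [List.length_append, Finset.sum_range_add, Finset.sum_congr rfl hleft,
    Finset.sum_congr rfl hright, Finset.sum_add_distrib, Finset.sum_const, Finset.card_range,
    nsmul_eq_mul]
  ring

lemma wd_insert (x y : Word) (c : Bool) :
    wd (x ++ [c] ++ y) = wd (x ++ y) + phi (x ++ [c]) + y.length * phi [c] := by
  simp only [wd_append, wd_singleton, phi_append, List.length_singleton]
  push_cast
  ring

lemma phi_nonneg_of_append_eq {y p s : Word} (hy : ∀ i, 0 ≤ phi (y.take i)) (hps : p ++ s = y) :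
    0 ≤ phi p := by
  subst hps
  simpa using hy p.length

theorem type1_decreases_width (u v z : Word)
    (h : ∀ i, 0 ≤ phi ((u ++ [true] ++ v ++ [false] ++ z).take i)) :
    wd (u ++ v ++ z) ≤ wd (u ++ [true] ++ v ++ [false] ++ z) := by
  have hua : 0 ≤ phi (u ++ [true]) :=
    phi_nonneg_of_append_eq h (s := v ++ [false] ++ z) (by simp)
  have huavb : 0 ≤ phi (u ++ [true] ++ v ++ [false]) := phi_nonneg_of_append_eq h rfl
  have hdel_b := wd_insert (u ++ [true] ++ v) z false
  have hdel_a := wd_insert u (v ++ z) true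
  simp only [List.append_assoc, List.length_append, phi_singleton_true, phi_singleton_false]
    at hdel_a hdel_b huavb ⊢
  push_cast at hdel_a
  linarith [v.length.cast_nonneg (α := ℤ)]
end

section
/- Let x be any word over {a,b} and n ≥ 1, and let y = α₁ⁿα₂ⁿ…αₜⁿ be obtained by repeating each letter of x = α₁…αₜ exactly n times in place. Then w(y) = n²·(w(x) − φ(x)) + (n(n+1)/2)·φ(x), where φ(a)=2, φ(b)=−2 extended additively and w is the sum of φ over all nonempty prefixes. -/
/-! The first letter of a word lies in each of its nonempty prefixes, so
`wd (c :: x) = (|x| + 1) φ(c) + wd x`. Consequently `wd (x ++ y) = wd x + |y| φ(x) + wd y` and a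
block `cⁿ` has width `n(n+1)/2 · φ(c)`; splitting the repeated word into its blocks, induction on
`x` gives the formula. Twice the widths are computed, so that `n(n+1)/2` is divided only at the
end, where `n(n+1)` is even. -/

lemma phi_nil : phi [] = 0 := rfl

lemma phi_cons (c : Bool) (x : Word) : phi (c :: x) = phi [c] + phi x := by
  simp [phi]

lemma phi_replicate (n : ℕ) (c : Bool) : phi (List.replicate n c) = n * phi [c] := by
  induction n with
  | zero => simp [phi_nil]
  | succ n ih => rw [List.replicate_succ, phi_cons c, ih]; push_cast; ring

lemma wd_nil : wd [] = 0 := rfl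

lemma wd_cons (c : Bool) (x : Word) : wd (c :: x) = (x.length + 1) * phi [c] + wd x := by
  have h_prefix (i : ℕ) : phi ((c :: x).take (i + 1)) = phi [c] + phi (x.take i) := by
    rw [List.take_succ_cons, phi_cons c]
  simp only [wd, h_prefix, List.length_cons, Finset.sum_add_distrib, Finset.sum_const,
    Finset.card_range, nsmul_eq_mul, Finset.sum_range_succ' (fun i => phi (x.take i)),
    List.take_zero, phi_nil, add_zero]
  push_cast
  ring

lemma two_mul_wd_replicate (n : ℕ) (c : Bool) :
    2 * wd (List.replicate n c) = n * (n + 1) * phi [c] := by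
  induction n with
  | zero => simp [wd_nil]
  | succ n ih =>
    rw [List.replicate_succ, wd_cons, List.length_replicate, mul_add, ih]
    push_cast
    ring

lemma length_flatMap_replicate (n : ℕ) (x : Word) :
    (x.flatMap (List.replicate n)).length = n * x.length := by
  induction x with
  | nil => rfl
  | cons c x ih =>
    rw [List.flatMap_cons, List.length_append, List.length_replicate, ih, List.length_cons]
    ring

lemma two_mul_wd_flatMap_replicate (n : ℕ) (x : Word) :
    2 * wd (x.flatMap (List.replicate n)) =
      2 * n ^ 2 * (wd x - phi x) + n * (n + 1) * phi x := by
  induction x with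
  | nil => rfl
  | cons c x ih =>
    rw [List.flatMap_cons, wd_append, mul_add, mul_add, two_mul_wd_replicate, ih, phi_replicate,
      length_flatMap_replicate, wd_cons, phi_cons c x]
    push_cast
    ring

theorem width_repeat_general_general (x : Word) (n : ℕ) :
    wd (x.flatMap (fun c => List.replicate n c)) =
      (n : ℤ) ^ 2 * (wd x - phi x) + ((n : ℤ) * ((n : ℤ) + 1) / 2) * phi x := by
  have h_even : 2 * ((n : ℤ) * ((n : ℤ) + 1) / 2) = (n : ℤ) * ((n : ℤ) + 1) :=
    Int.two_mul_ediv_two_of_even (Int.even_mul_succ_self _)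
  apply mul_left_cancel₀ (two_ne_zero : (2 : ℤ) ≠ 0)
  linear_combination two_mul_wd_flatMap_replicate n x - phi x * h_even

theorem width_repeat_general (x : Word) (n : ℕ) (hn : 1 ≤ n) :
    wd (x.flatMap (fun c => List.replicate n c)) =
      (n : ℤ) ^ 2 * (wd x - phi x) + ((n : ℤ) * ((n : ℤ) + 1) / 2) * phi x :=
  width_repeat_general_general x n
end
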